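/- arXiv:1612.06032 — 2 statements merged into one kernel-verified Lean document; each statement's English description precedes it below -/
import Mathlib

section
/- In a stratified Q-cotopological space X, for every point x ∈ X, the closure of the singleton 1_x (the map sending x to 1 and all other points to 0) is an irreducible closed set. In particular, for every closed set A, sub_X((1_x)‾, A) = A(x). -/
/-- A commutative and integral quantale: a complete lattice with a commutative
monoid operation `mul` whose unit is the top element, distributing over
arbitrary joins, together with its residuation `imp` characterized by the
adjoint property. -/
structure CIQuantale (Q : Type*) [CompleteLattice Q] where
  mul : Q → Q → Q
  mul_comm : ∀ p q : Q, mul p q = mul q p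
  mul_assoc : ∀ p q r : Q, mul (mul p q) r = mul p (mul q r)
  mul_top : ∀ p : Q, mul p ⊤ = p
  mul_sSup : ∀ (p : Q) (S : Set Q), mul p (sSup S) = ⨆ q ∈ S, mul p q
  imp : Q → Q → Q
  adj : ∀ p q r : Q, mul p q ≤ r ↔ q ≤ imp p r

namespace CIQuantale

variable {Q : Type*} [CompleteLattice Q] (𝒬 : CIQuantale Q) {X : Type*}

/-- The fuzzy inclusion order on `Q`-valued fuzzy sets. -/
def sub (A B : X → Q) : Q := ⨅ x, 𝒬.imp (A x) (B x)

/-- A `Q`-cotopology: contains all constants, closed under binary joins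
and arbitrary meets. -/
def IsCotop (τ : Set (X → Q)) : Prop :=
  (∀ p : Q, (fun _ => p) ∈ τ) ∧
  (∀ A B : X → Q, A ∈ τ → B ∈ τ → A ⊔ B ∈ τ) ∧
  (∀ S : Set (X → Q), S ⊆ τ → sInf S ∈ τ)

/-- Stratified: `p → A` is closed whenever `A` is closed. -/
def IsStratified (τ : Set (X → Q)) : Prop :=
  ∀ (p : Q) (A : X → Q), A ∈ τ → (fun x => 𝒬.imp p (A x)) ∈ τ

/-- Closure: the meet of all closed sets above `A`. -/
def cl (τ : Set (X → Q)) (A : X → Q) : X → Q :=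
  sInf {B | B ∈ τ ∧ A ≤ B}

/-- Irreducible closed set. -/
def Irred (τ : Set (X → Q)) (F : X → Q) : Prop :=
  F ∈ τ ∧ (⨆ x, F x) = ⊤ ∧
  ∀ A B : X → Q, A ∈ τ → B ∈ τ →
    𝒬.sub F (A ⊔ B) = 𝒬.sub F A ⊔ 𝒬.sub F B

/-- The fuzzy singleton `1ₓ`. -/
def pt [DecidableEq X] (x : X) : X → Q := fun y => if y = x then (⊤ : Q) else ⊥

/-- The specialization `Q`-order of a `Q`-cotopological space. -/
def specOrd (τ : Set (X → Q)) (x y : X) : Q := ⨅ A ∈ τ, 𝒬.imp (A y) (A x)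

/-- Fuzzy lower set with respect to a `Q`-order `R`. -/
def FuzzyLower (R : X → X → Q) (φ : X → Q) : Prop :=
  ∀ x y : X, 𝒬.mul (φ y) (R x y) ≤ φ x

/-- Irreducible fuzzy lower set. -/
def IrredLower (R : X → X → Q) (φ : X → Q) : Prop :=
  (⨆ x, φ x) = ⊤ ∧
  ∀ φ₁ φ₂ : X → Q, 𝒬.FuzzyLower R φ₁ → 𝒬.FuzzyLower R φ₂ →
    𝒬.sub φ (φ₁ ⊔ φ₂) = 𝒬.sub φ φ₁ ⊔ 𝒬.sub φ φ₂

/-- Pointwise negations of members of `τ`. -/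
def negSet (τ : Set (X → Q)) : Set (X → Q) :=
  {U | ∃ A ∈ τ, U = fun x => 𝒬.imp (A x) ⊥}

end CIQuantale

open CIQuantale

section Aux

variable {Q : Type*} [CompleteLattice Q] (𝒬 : CIQuantale Q) {X : Type*}

lemma CIQuantale.imp_top_eq (r : Q) : 𝒬.imp ⊤ r = r := by
  apply le_antisymm
  · have := (𝒬.adj ⊤ (𝒬.imp ⊤ r) r).2 le_rfl
    rwa [𝒬.mul_comm, 𝒬.mul_top] at this
  · exact (𝒬.adj ⊤ r r).1 (by rw [𝒬.mul_comm, 𝒬.mul_top])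

lemma CIQuantale.top_le_imp_self (p : Q) : (⊤ : Q) ≤ 𝒬.imp p p :=
  (𝒬.adj p ⊤ p).1 (le_of_eq (𝒬.mul_top p))

variable [DecidableEq X] (τ : Set (X → Q))

lemma pt_le_cl (x : X) : pt x ≤ cl τ (pt x) :=
  le_sInf fun _ hB => hB.2

lemma cl_pt_apply_self (x : X) : cl τ (pt x) x = ⊤ :=
  le_antisymm le_top (by simpa [pt] using pt_le_cl τ x x)

lemma cl_mem (hτ : IsCotop τ) (x : X) : cl τ (pt x) ∈ τ :=
  hτ.2.2 _ fun _ hB => hB.1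

lemma sub_cl_pt (hτ : IsCotop τ) (hs : 𝒬.IsStratified τ) (x : X)
    (A : X → Q) (hA : A ∈ τ) : 𝒬.sub (cl τ (pt x)) A = A x := by
  apply le_antisymm
  · have h := iInf_le (fun y => 𝒬.imp (cl τ (pt x) y) (A y)) x
    rwa [cl_pt_apply_self, 𝒬.imp_top_eq] at h
  · apply le_iInf
    intro y
    rw [← 𝒬.adj, 𝒬.mul_comm, 𝒬.adj]
    -- need : cl τ (pt x) y ≤ 𝒬.imp (A x) (A y)
    have hB : (fun y => 𝒬.imp (A x) (A y)) ∈ {B | B ∈ τ ∧ pt x ≤ B} := by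
      refine ⟨hs (A x) A hA, fun z => ?_⟩
      by_cases hz : z = x
      · subst hz; simpa [pt] using 𝒬.top_le_imp_self (A z)
      · simp [pt, hz]
    exact sInf_le hB y

end Aux

theorem stmt10 {Q : Type*} [CompleteLattice Q] (𝒬 : CIQuantale Q)
    {X : Type*} [DecidableEq X]
    (τ : Set (X → Q)) (hτ : IsCotop τ) (hs : 𝒬.IsStratified τ) (x : X) :
    𝒬.Irred τ (cl τ (pt x)) ∧ ∀ A ∈ τ, 𝒬.sub (cl τ (pt x)) A = A x := by
  have hsub := sub_cl_pt 𝒬 τ hτ hs x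
  refine ⟨⟨cl_mem τ hτ x, ?_, ?_⟩, hsub⟩
  · exact le_antisymm le_top (le_trans (le_of_eq (cl_pt_apply_self τ x).symm)
      (le_iSup (fun y => cl τ (pt x) y) x))
  · intro A B hA hB
    have hAB : A ⊔ B ∈ τ := hτ.2.1 A B hA hB
    rw [hsub A hA, hsub B hB, hsub (A ⊔ B) hAB, Pi.sup_apply]
end

section
/- Let X be a stratified Q-cotopological space. The family {s(A) : A closed in X}, where s(A)(F) = sub_X(F,A) for F an irreducible closed set, is a stratified Q-cotopology on irr(X): s(p_X) is the constant map p, s(A ∨ B) = s(A) ∨ s(B), s(⋀_j A_j) = ⋀_j s(A_j), and s(p → A) = p → s(A). -/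
namespace CIQuantale

variable {Q : Type*} [CompleteLattice Q] (𝒬 : CIQuantale Q)

lemma imp_iInf' {ι : Sort*} (p : Q) (f : ι → Q) :
    𝒬.imp p (⨅ i, f i) = ⨅ i, 𝒬.imp p (f i) := by
  refine eq_of_forall_le_iff fun q => ?_
  rw [← 𝒬.adj]
  constructor
  · intro h
    exact le_iInf fun i => (𝒬.adj _ _ _).mp (h.trans (iInf_le _ i))
  · intro h
    exact le_iInf fun i => (𝒬.adj _ _ _).mpr ((le_iInf_iff.mp h) i)

lemma imp_iSup_left {ι : Sort*} (g : ι → Q) (r : Q) :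
    𝒬.imp (⨆ i, g i) r = ⨅ i, 𝒬.imp (g i) r := by
  refine eq_of_forall_le_iff fun q => ?_
  rw [← 𝒬.adj, 𝒬.mul_comm, iSup, 𝒬.mul_sSup]
  simp only [iSup_range, iSup_le_iff, le_iInf_iff, ← 𝒬.adj]
  constructor
  · intro h i; rw [𝒬.mul_comm]; exact h i
  · intro h i; rw [𝒬.mul_comm]; exact h i

lemma imp_top' (r : Q) : 𝒬.imp ⊤ r = r := by
  refine eq_of_forall_le_iff fun q => ?_
  rw [← 𝒬.adj, 𝒬.mul_comm, 𝒬.mul_top]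

lemma imp_imp (a p b : Q) : 𝒬.imp a (𝒬.imp p b) = 𝒬.imp p (𝒬.imp a b) := by
  refine eq_of_forall_le_iff fun q => ?_
  rw [← 𝒬.adj, ← 𝒬.adj, ← 𝒬.adj, ← 𝒬.adj, ← 𝒬.mul_assoc, ← 𝒬.mul_assoc,
    𝒬.mul_comm p a]

end CIQuantale

open CIQuantale

theorem stmt12 {Q : Type*} [CompleteLattice Q] (𝒬 : CIQuantale Q) {X : Type*}
    (τ : Set (X → Q)) (hτ : IsCotop τ) (hs : 𝒬.IsStratified τ) :
    (∀ p : Q,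
      (fun F : {F : X → Q // 𝒬.Irred τ F} => 𝒬.sub F.1 (fun _ => p)) =
        fun _ => p) ∧
    (∀ A B : X → Q, A ∈ τ → B ∈ τ →
      (fun F : {F : X → Q // 𝒬.Irred τ F} => 𝒬.sub F.1 (A ⊔ B)) =
        (fun F : {F : X → Q // 𝒬.Irred τ F} => 𝒬.sub F.1 A) ⊔
        (fun F : {F : X → Q // 𝒬.Irred τ F} => 𝒬.sub F.1 B)) ∧
    (∀ (J : Type*) (A : J → X → Q), (∀ j, A j ∈ τ) →
      (fun F : {F : X → Q // 𝒬.Irred τ F} => 𝒬.sub F.1 (⨅ j, A j)) =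
        ⨅ j, (fun F : {F : X → Q // 𝒬.Irred τ F} => 𝒬.sub F.1 (A j))) ∧
    (∀ (p : Q) (A : X → Q), A ∈ τ →
      (fun F : {F : X → Q // 𝒬.Irred τ F} =>
          𝒬.sub F.1 (fun x => 𝒬.imp p (A x))) =
        fun F : {F : X → Q // 𝒬.Irred τ F} => 𝒬.imp p (𝒬.sub F.1 A)) := by
  refine ⟨?_, ?_, ?_, ?_⟩
  · intro p
    funext F
    have h := F.2.2.1
    show ⨅ x, 𝒬.imp (F.1 x) p = p
    rw [← 𝒬.imp_iSup_left, h, 𝒬.imp_top']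
  · intro A B hA hB
    funext F
    exact F.2.2.2 A B hA hB
  · intro J A _
    funext F
    show ⨅ x, 𝒬.imp (F.1 x) ((⨅ j, A j) x) = _
    have : ∀ x, (⨅ j, A j) x = ⨅ j, A j x := fun x => by simp
    simp only [this, 𝒬.imp_iInf']
    rw [iInf_comm]
    simp [CIQuantale.sub]
  · intro p A _
    funext F
    show ⨅ x, 𝒬.imp (F.1 x) (𝒬.imp p (A x)) = _
    simp only [𝒬.imp_imp]
    rw [← 𝒬.imp_iInf']
    rfl
end
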